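/- Let G be generated by a finite set S and n ≥ 1. Then the map D restricted to matrices over I^{2n}[G], namely D : M_{|S|×|S|}(I^{2n}[G]) → I^{2n+2}[G], ξ ↦ ∑_{s,t∈S}(1-s)*ξ_{st}(1-t), is a well-defined surjection, without any assumption on the abelianization of G. -/

import Mathlib

open MonoidAlgebra

variable {G : Type} [Group G]

/-- The additive map on the real group ring induced by `g ↦ g⁻¹`. -/
noncomputable def mstarHom (G : Type) [Group G] :
    MonoidAlgebra ℝ G →+ MonoidAlgebra ℝ G :=
  { toFun := MonoidAlgebra.mapDomain Inv.inv
    map_zero' := MonoidAlgebra.mapDomain_zero _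
    map_add' := MonoidAlgebra.mapDomain_add _ }

lemma mstarHom_single (a : G) (r : ℝ) :
    mstarHom G (MonoidAlgebra.single a r) = MonoidAlgebra.single a⁻¹ r :=
  MonoidAlgebra.mapDomain_single

private lemma mstar_mul (f g : MonoidAlgebra ℝ G) :
    mstarHom G (f * g) = mstarHom G g * mstarHom G f := by
  induction f using MonoidAlgebra.induction_linear with
  | zero => simp
  | add a b ha hb => simp only [add_mul, map_add, ha, hb, mul_add]
  | single a r =>
    induction g using MonoidAlgebra.induction_linear with
    | zero => simp
    | add c d hc hd => simp only [mul_add, map_add, hc, hd, add_mul]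
    | single c s =>
      simp only [MonoidAlgebra.single_mul_single, mstarHom_single, mul_inv_rev,
        mul_comm]

/-- The star ring structure on `ℝG` whose involution is induced by `g ↦ g⁻¹`. -/
noncomputable instance grpStar : StarRing (MonoidAlgebra ℝ G) where
  star f := mstarHom G f
  star_involutive f := by
    show mstarHom G (mstarHom G f) = f
    induction f using MonoidAlgebra.induction_linear with
    | zero => simp
    | add a b ha hb => simp only [map_add, ha, hb]
    | single a r => simp only [mstarHom_single, inv_inv]
  star_add f g := map_add _ f g
  star_mul f g := mstar_mul f g

/-- The augmentation ideal `I[G]`, as an `ℝ`-subspace of `ℝG`: the kernel of the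
augmentation homomorphism sending every group element to `1`. -/
noncomputable def Iaug (G : Type) [Group G] : Submodule ℝ (MonoidAlgebra ℝ G) :=
  LinearMap.ker ((MonoidAlgebra.lift ℝ ℝ G 1).toLinearMap)

/-- Sums of hermitian squares `∑ aᵢ* aᵢ` in a `*`-algebra. -/
noncomputable def SOS (A : Type*) [NonUnitalSemiring A] [StarRing A] : AddSubmonoid A :=
  AddSubmonoid.closure {x | ∃ a, x = star a * a}

/-- The map `D(ξ) = d* ξ d = ∑_{s,t ∈ S} (1-s)* ξ_{st} (1-t)`. -/
noncomputable def Dmap (S : Finset G) (ξ : Matrix S S (MonoidAlgebra ℝ G)) :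
    MonoidAlgebra ℝ G :=
  ∑ s : S, ∑ t : S,
    star (1 - MonoidAlgebra.of ℝ G (s : G)) * ξ s t * (1 - MonoidAlgebra.of ℝ G (t : G))


section Aux

variable {G : Type} [Group G]

local notation "ε" => MonoidAlgebra.lift ℝ ℝ G 1

lemma mem_Iaug_iff {x : MonoidAlgebra ℝ G} : x ∈ Iaug G ↔ ε x = 0 := Iff.rfl

lemma star_single' (a : G) (r : ℝ) :
    star (MonoidAlgebra.single a r) = MonoidAlgebra.single a⁻¹ r :=
  mstarHom_single a r

lemma eps_star (x : MonoidAlgebra ℝ G) : ε (mstarHom G x) = ε x := by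
  induction x using MonoidAlgebra.induction_linear with
  | zero => simp
  | add a b ha hb => rw [map_add, map_add, map_add, ha, hb]
  | single a r =>
    rw [mstarHom_single]
    simp [MonoidAlgebra.lift_single]

lemma one_sub_of_mem_Iaug (g : G) : (1 : MonoidAlgebra ℝ G) - MonoidAlgebra.of ℝ G g ∈ Iaug G := by
  rw [mem_Iaug_iff, map_sub, map_one, MonoidAlgebra.of_apply, MonoidAlgebra.lift_single]
  simp

lemma Iaug_mul_left (a : MonoidAlgebra ℝ G) {x : MonoidAlgebra ℝ G} (hx : x ∈ Iaug G) :
    a * x ∈ Iaug G := by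
  rw [mem_Iaug_iff] at hx ⊢
  rw [map_mul, hx, mul_zero]

lemma Iaug_mul_right (a : MonoidAlgebra ℝ G) {x : MonoidAlgebra ℝ G} (hx : x ∈ Iaug G) :
    x * a ∈ Iaug G := by
  rw [mem_Iaug_iff] at hx ⊢
  rw [map_mul, hx, zero_mul]

lemma star_mem_Iaug {x : MonoidAlgebra ℝ G} (hx : x ∈ Iaug G) : star x ∈ Iaug G :=
  (eps_star x).trans hx

lemma Iaug_pow_mul_left (k : ℕ) (a : MonoidAlgebra ℝ G) {x : MonoidAlgebra ℝ G}
    (hx : x ∈ (Iaug G) ^ (k + 1)) : a * x ∈ (Iaug G) ^ (k + 1) := by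
  rw [pow_succ'] at hx ⊢
  refine Submodule.mul_induction_on hx (fun m hm n hn => ?_) (fun y z hy hz => ?_)
  · rw [← mul_assoc]
    exact Submodule.mul_mem_mul (Iaug_mul_left a hm) hn
  · rw [mul_add]; exact add_mem hy hz

lemma Iaug_pow_mul_right (k : ℕ) (a : MonoidAlgebra ℝ G) {x : MonoidAlgebra ℝ G}
    (hx : x ∈ (Iaug G) ^ (k + 1)) : x * a ∈ (Iaug G) ^ (k + 1) := by
  rw [pow_succ] at hx ⊢
  refine Submodule.mul_induction_on hx (fun m hm n hn => ?_) (fun y z hy hz => ?_)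
  · rw [mul_assoc]
    exact Submodule.mul_mem_mul hm (Iaug_mul_right a hn)
  · rw [add_mul]; exact add_mem hy hz

lemma of_sub_one_mem_span (S : Finset G) (hS : Subgroup.closure (S : Set G) = ⊤) (g : G) :
    MonoidAlgebra.of ℝ G g - 1 ∈
      Submodule.span (MonoidAlgebra ℝ G)
        (Set.range fun t : S => (1 : MonoidAlgebra ℝ G) - MonoidAlgebra.of ℝ G (t : G)) := by
  have hg : g ∈ Subgroup.closure (S : Set G) := by rw [hS]; trivial
  induction hg using Subgroup.closure_induction with
  | mem x hx =>
    have : MonoidAlgebra.of ℝ G x - 1 = -((1 : MonoidAlgebra ℝ G) - MonoidAlgebra.of ℝ G x) := by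
      rw [neg_sub]
    rw [this]
    exact neg_mem (Submodule.subset_span ⟨⟨x, hx⟩, rfl⟩)
  | one => simp [MonoidAlgebra.one_def]
  | mul x y hx hy ihx ihy =>
    have : MonoidAlgebra.of ℝ G (x * y) - 1 =
        MonoidAlgebra.of ℝ G x * (MonoidAlgebra.of ℝ G y - 1) + (MonoidAlgebra.of ℝ G x - 1) := by
      rw [map_mul]; noncomm_ring
    rw [this]
    exact add_mem (Submodule.smul_mem _ _ ihy) ihx
  | inv x hx ihx =>
    have h1 : MonoidAlgebra.of ℝ G x⁻¹ * (MonoidAlgebra.of ℝ G x - 1) =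
        1 - MonoidAlgebra.of ℝ G x⁻¹ := by
      rw [mul_sub, ← map_mul, inv_mul_cancel, map_one, mul_one]
    have : MonoidAlgebra.of ℝ G x⁻¹ - 1 =
        (-(MonoidAlgebra.of ℝ G x⁻¹)) * (MonoidAlgebra.of ℝ G x - 1) := by
      rw [neg_mul, h1, neg_sub]
    rw [this]
    exact Submodule.smul_mem _ _ ihx

lemma Iaug_decomp (S : Finset G) (hS : Subgroup.closure (S : Set G) = ⊤)
    {x : MonoidAlgebra ℝ G} (hx : x ∈ Iaug G) :
    ∃ c : S → MonoidAlgebra ℝ G,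
      x = ∑ t : S, c t * ((1 : MonoidAlgebra ℝ G) - MonoidAlgebra.of ℝ G (t : G)) := by
  have hsum : ∑ g ∈ x.coeff.support, x.coeff g = 0 := by
    have h1 : ε x = ∑ g ∈ x.coeff.support, x.coeff g := by
      conv_lhs => rw [← MonoidAlgebra.sum_single x]
      rw [Finsupp.sum, map_sum]
      simp [MonoidAlgebra.lift_single]
    rw [← h1]; exact hx
  have hrepr : x = ∑ g ∈ x.coeff.support, x.coeff g • (MonoidAlgebra.of ℝ G g - 1) := by
    have : ∑ g ∈ x.coeff.support, x.coeff g • (MonoidAlgebra.of ℝ G g - (1 : MonoidAlgebra ℝ G)) =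
        (∑ g ∈ x.coeff.support, x.coeff g • MonoidAlgebra.of ℝ G g) - (∑ g ∈ x.coeff.support, x.coeff g) • 1 := by
      rw [Finset.sum_smul, ← Finset.sum_sub_distrib]
      simp [smul_sub]
    rw [this, hsum, zero_smul, sub_zero]
    conv_lhs => rw [← MonoidAlgebra.sum_single x]
    rw [Finsupp.sum]
    refine Finset.sum_congr rfl fun g _ => ?_
    simp [MonoidAlgebra.of_apply, MonoidAlgebra.smul_single']
  have hmem : x ∈ Submodule.span (MonoidAlgebra ℝ G)
      (Set.range fun t : S => (1 : MonoidAlgebra ℝ G) - MonoidAlgebra.of ℝ G (t : G)) := by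
    rw [hrepr]
    refine Submodule.sum_mem _ fun g _ => ?_
    rw [← algebraMap_smul (MonoidAlgebra ℝ G) (x.coeff g)]
    exact Submodule.smul_mem _ _ (of_sub_one_mem_span S hS g)
  rw [Submodule.mem_span_range_iff_exists_fun] at hmem
  obtain ⟨c, hc⟩ := hmem
  exact ⟨c, by rw [← hc]; rfl⟩

lemma stepR (S : Finset G) (hS : Subgroup.closure (S : Set G) = ⊤)
    (P : Submodule ℝ (MonoidAlgebra ℝ G))
    (hP : ∀ a : MonoidAlgebra ℝ G, ∀ p ∈ P, p * a ∈ P)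
    {x : MonoidAlgebra ℝ G} (hx : x ∈ P * Iaug G) :
    ∃ q : S → MonoidAlgebra ℝ G, (∀ t, q t ∈ P) ∧
      x = ∑ t : S, q t * ((1 : MonoidAlgebra ℝ G) - MonoidAlgebra.of ℝ G (t : G)) := by
  refine Submodule.mul_induction_on hx (fun p hp i hi => ?_) (fun y z hy hz => ?_)
  · obtain ⟨c, hc⟩ := Iaug_decomp S hS hi
    refine ⟨fun t => p * c t, fun t => hP _ _ hp, ?_⟩
    rw [hc, Finset.mul_sum]
    exact Finset.sum_congr rfl fun t _ => (mul_assoc _ _ _).symm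
  · obtain ⟨q1, hq1, he1⟩ := hy
    obtain ⟨q2, hq2, he2⟩ := hz
    refine ⟨q1 + q2, fun t => add_mem (hq1 t) (hq2 t), ?_⟩
    rw [he1, he2, ← Finset.sum_add_distrib]
    exact Finset.sum_congr rfl fun t _ => (add_mul _ _ _).symm

lemma stepL (S : Finset G) (hS : Subgroup.closure (S : Set G) = ⊤)
    (P : Submodule ℝ (MonoidAlgebra ℝ G))
    (hP : ∀ a : MonoidAlgebra ℝ G, ∀ p ∈ P, a * p ∈ P)
    {x : MonoidAlgebra ℝ G} (hx : x ∈ Iaug G * P) :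
    ∃ q : S → MonoidAlgebra ℝ G, (∀ s, q s ∈ P) ∧
      x = ∑ s : S, star ((1 : MonoidAlgebra ℝ G) - MonoidAlgebra.of ℝ G (s : G)) * q s := by
  refine Submodule.mul_induction_on hx (fun i hi p hp => ?_) (fun y z hy hz => ?_)
  · obtain ⟨c, hc⟩ := Iaug_decomp S hS (star_mem_Iaug hi)
    have hi' : i = ∑ s : S, star ((1 : MonoidAlgebra ℝ G) - MonoidAlgebra.of ℝ G (s : G)) * star (c s) := by
      have := congrArg star hc
      rw [star_star, star_sum] at this
      rw [this]
      exact Finset.sum_congr rfl fun s _ => by rw [star_mul]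
    refine ⟨fun s => star (c s) * p, fun s => hP _ _ hp, ?_⟩
    · rw [hi', Finset.sum_mul]
      exact Finset.sum_congr rfl fun s _ => (mul_assoc _ _ _)
  · obtain ⟨q1, hq1, he1⟩ := hy
    obtain ⟨q2, hq2, he2⟩ := hz
    refine ⟨q1 + q2, fun s => add_mem (hq1 s) (hq2 s), ?_⟩
    rw [he1, he2, ← Finset.sum_add_distrib]
    exact Finset.sum_congr rfl fun s _ => (mul_add _ _ _).symm

end Aux
/-- For any `n ≥ 1`, the map `D` restricted to matrices over `I^{2n}[G]` is a
well-defined surjection onto `I^{2n+2}[G]`, with no assumption on the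
abelianization of `G`. -/

theorem D_welldefined_surjective_on_powers (G : Type) [Group G] (S : Finset G)
    (hS : Subgroup.closure (S : Set G) = ⊤) (n : ℕ) (hn : 1 ≤ n) :
    (∀ ξ : Matrix S S (MonoidAlgebra ℝ G),
      (∀ s t : S, ξ s t ∈ (Iaug G) ^ (2 * n)) → Dmap S ξ ∈ (Iaug G) ^ (2 * n + 2)) ∧
    (∀ η ∈ (Iaug G) ^ (2 * n + 2), ∃ ξ : Matrix S S (MonoidAlgebra ℝ G),
      (∀ s t : S, ξ s t ∈ (Iaug G) ^ (2 * n)) ∧ Dmap S ξ = η) := by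
  obtain ⟨k, hk⟩ : ∃ k, 2 * n = k + 1 := ⟨2 * n - 1, by omega⟩
  have hpow : (Iaug G) ^ (2 * n + 2) = Iaug G * (Iaug G) ^ (2 * n) * Iaug G := by
    rw [pow_succ, pow_succ']
  constructor
  · intro ξ hξ
    rw [Dmap, hpow]
    refine Submodule.sum_mem _ fun s _ => Submodule.sum_mem _ fun t _ => ?_
    exact Submodule.mul_mem_mul
      (Submodule.mul_mem_mul (star_mem_Iaug (one_sub_of_mem_Iaug (s : G))) (hξ s t))
      (one_sub_of_mem_Iaug (t : G))
  · intro η hη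
    rw [hpow] at hη
    have hPright : ∀ a : MonoidAlgebra ℝ G, ∀ p ∈ Iaug G * (Iaug G) ^ (2 * n), p * a ∈ Iaug G * (Iaug G) ^ (2 * n) := by
      intro a p hp
      refine Submodule.mul_induction_on hp (fun m hm q hq => ?_) (fun y z hy hz => ?_)
      · rw [mul_assoc]
        refine Submodule.mul_mem_mul hm ?_
        rw [hk] at hq ⊢
        exact Iaug_pow_mul_right k a hq
      · rw [add_mul]; exact add_mem hy hz
    obtain ⟨q, hq, hqe⟩ := stepR S hS (Iaug G * (Iaug G) ^ (2 * n)) hPright hη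
    have hPleft : ∀ a : MonoidAlgebra ℝ G, ∀ p ∈ (Iaug G) ^ (2 * n), a * p ∈ (Iaug G) ^ (2 * n) := by
      intro a p hp
      rw [hk] at hp ⊢
      exact Iaug_pow_mul_left k a hp
    have := fun t : S => stepL S hS ((Iaug G) ^ (2 * n)) hPleft (hq t)
    choose r hr1 hr2 using this
    refine ⟨Matrix.of fun s t => r t s, fun s t => hr1 t s, ?_⟩
    rw [Dmap, Finset.sum_comm, hqe]
    refine Finset.sum_congr rfl fun t _ => ?_
    rw [hr2 t, Finset.sum_mul]
    exact Finset.sum_congr rfl fun s _ => by rw [Matrix.of_apply, mul_assoc]
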